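/- Let A, B ∈ M_n(ℝ₊) be nilpotent in the max algebra, and let C = (A⊗B) ⊕ (B⊗A) be their max commutator. If A⊗C = 0 and B⊗C = 0, then A and B are simultaneously triangularizable by a permutation matrix. -/

import Mathlib

open Matrix Finset

noncomputable section

/-- Max-plus matrix product: `(A ⊗ B) i j = max_k (A i k * B k j)`. -/
def mMul {n : ℕ} (A B : Matrix (Fin n) (Fin n) NNReal) : Matrix (Fin n) (Fin n) NNReal :=
  fun i j => Finset.univ.sup fun k => A i k * B k j

/-- Entrywise maximum of matrices. -/
def msup {n : ℕ} (A B : Matrix (Fin n) (Fin n) NNReal) : Matrix (Fin n) (Fin n) NNReal :=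
  fun i j => max (A i j) (B i j)

/-- Max-plus powers. -/
def mPow {n : ℕ} (A : Matrix (Fin n) (Fin n) NNReal) : ℕ → Matrix (Fin n) (Fin n) NNReal
  | 0 => 1
  | k + 1 => mMul A (mPow A k)

/-- Conjugation by the permutation matrix of `σ` : `(P⁻¹AP) i j = A (σ i) (σ j)`. -/
def conjP {n : ℕ} (σ : Equiv.Perm (Fin n)) (A : Matrix (Fin n) (Fin n) NNReal) :
    Matrix (Fin n) (Fin n) NNReal := fun i j => A (σ i) (σ j)

/-- Upper triangular. -/
def UpperTri {n : ℕ} (M : Matrix (Fin n) (Fin n) NNReal) : Prop :=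
  ∀ i j : Fin n, j < i → M i j = 0

/-- Edge relation of the digraph `G_A`. -/
def Edge {n : ℕ} (A : Matrix (Fin n) (Fin n) NNReal) (i j : Fin n) : Prop := 0 < A i j

/-- `G_A` has no directed cycle passing through at least two distinct vertices. -/
def NoMultiVertexCycle {n : ℕ} (A : Matrix (Fin n) (Fin n) NNReal) : Prop :=
  ∀ i j : Fin n, i ≠ j →
    ¬(Relation.TransGen (Edge A) i j ∧ Relation.TransGen (Edge A) j i)

/-- Triangularizable via a permutation matrix. -/
def Triangularizable {n : ℕ} (A : Matrix (Fin n) (Fin n) NNReal) : Prop :=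
  ∃ σ : Equiv.Perm (Fin n), UpperTri (conjP σ A)

/-- Simultaneously triangularizable via one permutation matrix. -/
def SimTriangularizable {n : ℕ} (A B : Matrix (Fin n) (Fin n) NNReal) : Prop :=
  ∃ σ : Equiv.Perm (Fin n), UpperTri (conjP σ A) ∧ UpperTri (conjP σ B)

/-- Max-plus nilpotency. -/
def MNilpotent {n : ℕ} (A : Matrix (Fin n) (Fin n) NNReal) : Prop :=
  ∃ k : ℕ, mPow A k = 0

/-- Tropical determinant. -/
def tdet {n : ℕ} (M : Matrix (Fin n) (Fin n) NNReal) : NNReal :=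
  Finset.univ.sup fun σ : Equiv.Perm (Fin n) => ∏ i, M i (σ i)

/-- The matrix `M(z) = I ⊕ z₁A ⊕ z₂B`. -/
def Mz {n : ℕ} (A B : Matrix (Fin n) (Fin n) NNReal) (z₁ z₂ : NNReal) :
    Matrix (Fin n) (Fin n) NNReal :=
  fun i j => max (max ((1 : Matrix (Fin n) (Fin n) NNReal) i j) (z₁ * A i j)) (z₂ * B i j)

/-
Write `G_X` for the digraph with an edge `i → j` when `X i j > 0`. Max-plus nilpotency of `X` says
exactly that `G_X` has no cycle. An `A`-edge followed by a `B`-edge (or vice versa) is an edge of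
`G_C`, so `A ⊗ C = B ⊗ C = 0` forbids such a change of colour immediately after any edge of
`G_{A ⊕ B}`. Along a cycle of `G_{A ⊕ B}` every edge has a predecessor, so the cycle never changes
colour: it is a cycle of `G_A` or of `G_B`. Hence `G_{A ⊕ B}` is acyclic, and a topological
order of its vertices triangularizes `A` and `B` at once.
-/

namespace Relation

variable {α : Type*} {R S : α → α → Prop}

theorem TransGen.exists_head_transGen_self {u : α} (h : TransGen R u u) :
    ∃ w, R u w ∧ TransGen R w w := by
  obtain ⟨w, huw, hwu⟩ := TransGen.head'_iff.1 h
  exact ⟨w, huw, TransGen.tail' hwu huw⟩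

theorem reflTransGen_left_of_reflTransGen_sup
    (hRS : ∀ w x y z, (R ⊔ S) w x → R x y → S y z → False)
    {w x y q : α} (hwx : (R ⊔ S) w x) (hxy : R x y) (hyq : ReflTransGen (R ⊔ S) y q) :
    ReflTransGen R y q := by
  induction hyq using ReflTransGen.head_induction_on generalizing w x with
  | refl => exact .refl
  | head hyz _ ih =>
    have hRyz : R _ _ := hyz.resolve_right (hRS w x _ _ hwx hxy)
    exact .head hRyz (ih (Or.inl hxy) hRyz)

theorem transGen_self_or_of_transGen_sup_self
    (hRS : ∀ w x y z, (R ⊔ S) w x → R x y → S y z → False)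
    (hSR : ∀ w x y z, (S ⊔ R) w x → S x y → R y z → False)
    {u : α} (h : TransGen (R ⊔ S) u u) : TransGen R u u ∨ TransGen S u u := by
  obtain ⟨w, -, hwu⟩ := TransGen.tail'_iff.1 h
  obtain ⟨y, huy, hyu⟩ := TransGen.head'_iff.1 h
  rcases huy with huy | huy
  · exact .inl (TransGen.head' huy (reflTransGen_left_of_reflTransGen_sup hRS hwu huy hyu))
  · rw [sup_comm] at hwu hyu
    exact .inr (TransGen.head' huy (reflTransGen_left_of_reflTransGen_sup hSR hwu huy hyu))

end Relation

open Relation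

theorem exists_equiv_fin_lt_of_acyclic {α : Type*} [Fintype α] {m : ℕ}
    (hm : Fintype.card α = m) {r : α → α → Prop} (hr : ∀ a, ¬TransGen r a a) :
    ∃ e : Fin m ≃ α, ∀ i j, r (e i) (e j) → i < j := by
  let _ : PartialOrder α :=
    { le := ReflTransGen r
      le_refl := fun _ => .refl
      le_trans := fun _ _ _ => ReflTransGen.trans
      le_antisymm := fun a b hab hba => by
        by_contra hne
        have hab' := (reflTransGen_iff_eq_or_transGen.1 hab).resolve_left (Ne.symm hne)
        exact hr a (hab'.trans_left hba) }
  let _ : Fintype (LinearExtension α) := ‹Fintype α›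
  let f := Fintype.orderIsoFinOfCardEq (LinearExtension α) hm
  refine ⟨f.toEquiv, fun i j hij => ?_⟩
  have hne : f i ≠ f j := fun h => hr _ (.single (h ▸ hij))
  have hle : f i ≤ f j :=
    (toLinearExtension : α →o LinearExtension α).monotone (ReflTransGen.single hij)
  exact f.lt_iff_lt.1 (lt_of_le_of_ne hle hne)

section MaxPlus

variable {n : ℕ}

theorem mMul_pos_iff {A B : Matrix (Fin n) (Fin n) NNReal} {i j : Fin n} :
    0 < mMul A B i j ↔ ∃ k, 0 < A i k ∧ 0 < B k j := by
  simp [mMul, Finset.lt_sup_iff, CanonicallyOrderedAdd.mul_pos]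

theorem msup_comm (A B : Matrix (Fin n) (Fin n) NNReal) : msup A B = msup B A := by
  funext i j
  exact max_comm _ _

theorem exists_mPow_pos_of_transGen_self {A : Matrix (Fin n) (Fin n) NNReal} (m : ℕ) {u : Fin n}
    (hu : TransGen (Edge A) u u) : ∃ v, 0 < mPow A m u v := by
  induction m generalizing u with
  | zero => exact ⟨u, by simp [mPow]⟩
  | succ m ih =>
    obtain ⟨w, huw, hw⟩ := hu.exists_head_transGen_self
    obtain ⟨v, hv⟩ := ih hw
    exact ⟨v, mMul_pos_iff.2 ⟨w, huw, hv⟩⟩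

theorem MNilpotent.not_transGen_edge_self {A : Matrix (Fin n) (Fin n) NNReal}
    (hA : MNilpotent A) (u : Fin n) : ¬TransGen (Edge A) u u := fun hu => by
  obtain ⟨m, hm⟩ := hA
  obtain ⟨v, hv⟩ := exists_mPow_pos_of_transGen_self m hu
  simp [hm] at hv

theorem edge_switch_false {A B : Matrix (Fin n) (Fin n) NNReal}
    (hAC : mMul A (msup (mMul A B) (mMul B A)) = 0)
    (hBC : mMul B (msup (mMul A B) (mMul B A)) = 0) (w x y z : Fin n)
    (hwx : (Edge A ⊔ Edge B) w x) (hxy : Edge A x y) (hyz : Edge B y z) : False := by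
  have hC : 0 < msup (mMul A B) (mMul B A) x z :=
    lt_max_of_lt_left (mMul_pos_iff.2 ⟨y, hxy, hyz⟩)
  rcases hwx with hwx | hwx
  · simpa [hAC] using mMul_pos_iff.2 ⟨x, hwx, hC⟩
  · simpa [hBC] using mMul_pos_iff.2 ⟨x, hwx, hC⟩

end MaxPlus

theorem stmt9 {n : ℕ} (A B : Matrix (Fin n) (Fin n) NNReal)
    (hA : MNilpotent A) (hB : MNilpotent B)
    (hAC : mMul A (msup (mMul A B) (mMul B A)) = 0)
    (hBC : mMul B (msup (mMul A B) (mMul B A)) = 0) :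
    SimTriangularizable A B := by
  have hAB := edge_switch_false hAC hBC
  have hBA := edge_switch_false (A := B) (B := A) (by rwa [msup_comm]) (by rwa [msup_comm])
  have hacyclic : ∀ u, ¬TransGen (Edge A ⊔ Edge B) u u := fun u hu =>
    (transGen_self_or_of_transGen_sup_self hAB hBA hu).elim
      (hA.not_transGen_edge_self u) (hB.not_transGen_edge_self u)
  obtain ⟨σ, hσ⟩ := exists_equiv_fin_lt_of_acyclic (Fintype.card_fin n) hacyclic
  refine ⟨σ, fun i j hji => ?_, fun i j hji => ?_⟩
  · by_contra hne
    exact lt_asymm hji (hσ i j (.inl (pos_iff_ne_zero.2 hne)))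
  · by_contra hne
    exact lt_asymm hji (hσ i j (.inr (pos_iff_ne_zero.2 hne)))
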